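/- Let A = ⊕_{i≥0} A_i be a finite-dimensional graded algebra with A_i · A_j = A_{i+j} for all i, j ≥ 0, and J = ⊕_{i≥1} A_i. Then J is a projective left A-module if and only if A is isomorphic to the tensor algebra A_0[A_1] = A_0 ⊕ A_1 ⊕ (A_1 ⊗_{A_0} A_1) ⊕ … and A_1 is a projective left A_0-module. -/

import Mathlib

open Submodule TensorProduct

/-- Dual-basis-lemma encoding of projectivity of the subset `M` of `B` as a left
module over the subset `R ⊆ B`. -/
def IsDualBasisProj (B : Type) [Ring B] (R M : Set B) : Prop :=
  ∃ (n : ℕ) (b : Fin n → B) (c : Fin n → B → B),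
    (∀ j, b j ∈ M) ∧
    (∀ j x y, c j (x + y) = c j x + c j y) ∧
    (∀ j x, c j x ∈ R) ∧
    (∀ j r x, r ∈ R → c j (r * x) = r * c j x) ∧
    (∀ x ∈ M, x = ∑ j, c j x * b j)

variable (k : Type) [Field k] (A : Type) [Ring A] [Algebra k A]
  (𝒜 : ℕ → Submodule k A) [GradedRing 𝒜]

/-- The multiplication map `𝒜 1 ⊗_k 𝒜 i → 𝒜 (1 + i)`. -/
noncomputable def gradedMulMap (i : ℕ) :
    TensorProduct k ↥(𝒜 1) ↥(𝒜 i) →ₗ[k] ↥(𝒜 (1 + i)) :=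
  TensorProduct.lift (LinearMap.mk₂ k
    (fun x y => (⟨(x : A) * y, SetLike.mul_mem_graded x.2 y.2⟩ : ↥(𝒜 (1 + i))))
    (by intro x x' y; apply Subtype.ext; simp [add_mul])
    (by intro r x y; apply Subtype.ext; simp [Algebra.smul_mul_assoc])
    (by intro x y y'; apply Subtype.ext; simp [mul_add])
    (by intro r x y; apply Subtype.ext; simp [Algebra.mul_smul_comm]))

/-- The submodule of `𝒜 1 ⊗_k 𝒜 i` of `𝒜 0`-balancing relations; the quotient by
it is the tensor product `𝒜 1 ⊗_{𝒜 0} 𝒜 i`. -/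
def balancedRel (i : ℕ) : Submodule k (TensorProduct k ↥(𝒜 1) ↥(𝒜 i)) :=
  Submodule.span k {z | ∃ (x : ↥(𝒜 1)) (r : ↥(𝒜 0)) (y : ↥(𝒜 i))
    (hxr : (x : A) * r ∈ 𝒜 1) (hry : (r : A) * y ∈ 𝒜 i),
    z = (⟨(x : A) * r, hxr⟩ : ↥(𝒜 1)) ⊗ₜ[k] y
      - x ⊗ₜ[k] (⟨(r : A) * y, hry⟩ : ↥(𝒜 i))}

/-!
Both directions run through the dual basis lemma for the left ideal `J = A_{≥1}`, which is
generated by `A_1` because `A_{i+1} = A_i A_1`.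

If `J` is projective, pick a dual basis `(F_s, v_s)` of `J` with `v_s` spanning `A_1`. Taking
homogeneous components, `x ↦ (F_s x)_0` restricted to `A_1` is a dual basis of `A_1` over `A_0`.
Writing `x = ∑ F_s(x) v_s` and recursing moves the last degree-one factor of `x ∈ A_{1+i}` into
the second tensor slot, which yields a left inverse `A_{1+i} → A_1 ⊗_{A_0} A_i` of multiplication.

Conversely, given a dual basis `(c_j, b_j)` of `A_1` over `A_0` and `A_1 ⊗_{A_0} A_i ≅ A_{1+i}`,
each `c_j` extends degree by degree to `A_{i+1} → A_i` through `F_j(p q) = p F_j(q)` for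
`p ∈ A_1`; this is well defined on the tensor product because `F_j` is `A_0`-linear in the
previous degree. The `F_j` are then `A`-linear on `J` and `x = ∑ F_j(x) b_j`.
-/

section DualBasis

variable {R M : Type*} [Semiring R] [AddCommMonoid M] [Module R M] {ι : Type*} [Fintype ι]

theorem Module.Projective.of_dualBasis (v : ι → M) (f : ι → M →ₗ[R] R)
    (hf : ∀ x, ∑ i, f i x • v i = x) : Module.Projective R M :=
  Module.Projective.of_split (LinearMap.pi f) (Fintype.linearCombination R v)
    (LinearMap.ext fun x => by simpa [Fintype.linearCombination_apply] using hf x)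

theorem Module.Projective.exists_dualBasis [Module.Projective R M] (v : ι → M)
    (hv : Submodule.span R (Set.range v) = ⊤) :
    ∃ f : ι → M →ₗ[R] R, ∀ x, ∑ i, f i x • v i = x := by
  obtain ⟨g, hg⟩ := Module.projective_lifting_property (Fintype.linearCombination R v)
    LinearMap.id (LinearMap.range_eq_top.1 (by rw [Fintype.range_linearCombination, hv]))
  exact ⟨fun i => LinearMap.proj i ∘ₗ g, fun x => by
    simpa [Fintype.linearCombination_apply] using LinearMap.congr_fun hg x⟩

end DualBasis

section IdealDualBasis

variable {k A : Type*} [CommSemiring k] [Semiring A] [Algebra k A] {ι : Type*} [Fintype ι]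

structure Submodule.IsDualBasis (I : Submodule A A) (v : ι → A) (F : ι → A →ₗ[k] A) : Prop where
  mem : ∀ i, v i ∈ I
  map_mul : ∀ i a, ∀ x ∈ I, F i (a * x) = a * F i x
  sum_mul : ∀ x ∈ I, ∑ i, F i x * v i = x

variable {I : Submodule A A} {v : ι → A}

theorem Submodule.IsDualBasis.projective {F : ι → A →ₗ[k] A} (h : I.IsDualBasis v F) :
    Module.Projective A I :=
  Module.Projective.of_dualBasis (fun i => (⟨v i, h.mem i⟩ : I))
    (fun i => ({ toFun x := F i x.1
                 map_add' x y := map_add (F i) x.1 y.1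
                 map_smul' a x := h.map_mul i a x.1 x.2 } : I →ₗ[A] A))
    (fun x => Subtype.ext (by simpa using h.sum_mul x x.2))

end IdealDualBasis

theorem Submodule.exists_isDualBasis {k A : Type*} [Field k] [Ring A] [Algebra k A] {ι : Type*}
    [Fintype ι] {I : Submodule A A} {v : ι → A} [Module.Projective A I] (hv : ∀ i, v i ∈ I)
    (hspan : span A (Set.range v) = I) : ∃ F : ι → A →ₗ[k] A, I.IsDualBasis v F := by
  obtain ⟨f, hf⟩ := Module.Projective.exists_dualBasis (fun i => (⟨v i, hv i⟩ : I)) <| by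
    refine eq_top_iff.2 fun x _ => ?_
    obtain ⟨c, hc⟩ := (mem_span_range_iff_exists_fun A).1 (hspan.ge x.2)
    exact (mem_span_range_iff_exists_fun A).2 ⟨c, Subtype.ext (by simpa [smul_eq_mul] using hc)⟩
  choose F hF using fun i => LinearMap.exists_extend (K := k) (p := I.restrictScalars k)
    ((f i).restrictScalars k)
  have hFf : ∀ i, ∀ x (hx : x ∈ I), F i x = f i ⟨x, hx⟩ := fun i x hx =>
    LinearMap.congr_fun (hF i) ⟨x, hx⟩
  refine ⟨F, hv, fun i a x hx => ?_, fun x hx => ?_⟩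
  · rw [hFf i _ (Ideal.mul_mem_left I a hx), hFf i x hx]
    exact map_smul (f i) a ⟨x, hx⟩
  · simpa [hFf _ x hx] using congr_arg Subtype.val (hf ⟨x, hx⟩)

section Graded

variable {k A : Type} [Field k] [Ring A] [Algebra k A] (𝒜 : ℕ → Submodule k A)

-- A shortcut without which instance search fails to find `HasQuotient` for `𝒜 1 ⊗[k] 𝒜 i`.
instance (i : ℕ) : AddCommGroup (𝒜 i) := Submodule.addCommGroup _

theorem tmul_sub_tmul_mem_balancedRel {i : ℕ} {x x' : 𝒜 1} {r : 𝒜 0} {y y' : 𝒜 i}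
    (hx : (x' : A) = x * r) (hy : (y' : A) = r * y) :
    x' ⊗ₜ[k] y - x ⊗ₜ[k] y' ∈ balancedRel k A 𝒜 i := by
  obtain ⟨x', rfl⟩ : ∃ h, x' = ⟨x * r, h⟩ := ⟨hx ▸ x'.2, Subtype.ext hx⟩
  obtain ⟨y', rfl⟩ : ∃ h, y' = ⟨r * y, h⟩ := ⟨hy ▸ y'.2, Subtype.ext hy⟩
  exact subset_span ⟨x, r, y, _, _, rfl⟩

abbrev irrelevantIdeal : Submodule A A := span A {x | ∃ i, 0 < i ∧ x ∈ 𝒜 i}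

theorem mem_irrelevantIdeal {i : ℕ} {x : A} (hi : 0 < i) (hx : x ∈ 𝒜 i) :
    x ∈ irrelevantIdeal 𝒜 :=
  subset_span ⟨i, hi, hx⟩

theorem exists_span_eq_irrelevantIdeal [Module.Finite k (𝒜 1)]
    (hgen : ∀ i j, 𝒜 i * 𝒜 j = 𝒜 (i + j)) :
    ∃ (n : ℕ) (v : Fin n → 𝒜 1), span A (Set.range fun s => (v s : A)) = irrelevantIdeal 𝒜 := by
  obtain ⟨n, v, hv⟩ := Module.Finite.exists_fin (R := k) (M := 𝒜 1)
  set S := span A (Set.range fun s => (v s : A))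
  have hv' : 𝒜 1 ≤ S.restrictScalars k := by
    intro p hp
    have := mem_map_of_mem (f := (𝒜 1).subtype) (hv.ge (mem_top (x := ⟨p, hp⟩)))
    rw [map_span, ← Set.range_comp] at this
    exact span_le_restrictScalars k A _ this
  refine ⟨n, v, le_antisymm (span_le.2 ?_) (span_le.2 ?_)⟩
  · rintro _ ⟨s, rfl⟩
    exact mem_irrelevantIdeal 𝒜 one_pos (v s).2
  · rintro x ⟨i, hi, hx⟩
    obtain ⟨m, rfl⟩ := Nat.exists_eq_add_of_lt hi
    rw [zero_add, ← hgen] at hx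
    exact (mul_le (P := S.restrictScalars k)).2 (fun a _ p hp => S.smul_mem a (hv' hp)) hx

abbrev BalancedTensor (i : ℕ) := 𝒜 1 ⊗[k] 𝒜 i ⧸ balancedRel k A 𝒜 i

def mulLeftLift (G : A →ₗ[k] A) (j : ℕ) : 𝒜 1 ⊗[k] 𝒜 j →ₗ[k] A :=
  LinearMap.mul' k A ∘ₗ TensorProduct.map (𝒜 1).subtype (G ∘ₗ (𝒜 j).subtype)

@[simp] theorem mulLeftLift_tmul (G : A →ₗ[k] A) (j : ℕ) (p : 𝒜 1) (q : 𝒜 j) :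
    mulLeftLift 𝒜 G j (p ⊗ₜ q) = p * G q := rfl

theorem balancedRel_le_ker_mulLeftLift {G : A →ₗ[k] A} {j : ℕ}
    (hG : ∀ r ∈ 𝒜 0, ∀ x ∈ 𝒜 j, G (r * x) = r * G x) :
    balancedRel k A 𝒜 j ≤ LinearMap.ker (mulLeftLift 𝒜 G j) :=
  span_le.2 <| by
    rintro _ ⟨x, r, y, _, _, rfl⟩
    simp [hG r r.2 y y.2, mul_assoc]

variable [GradedRing 𝒜]

@[simp] theorem gradedMulMap_tmul (i : ℕ) (x : 𝒜 1) (y : 𝒜 i) :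
    (gradedMulMap k A 𝒜 i (x ⊗ₜ y) : A) = x * y := rfl

theorem gradedMulMap_surjective (hgen : ∀ i j, 𝒜 i * 𝒜 j = 𝒜 (i + j)) (i : ℕ) :
    Function.Surjective (gradedMulMap k A 𝒜 i) := by
  have hle : 𝒜 1 * 𝒜 i ≤ LinearMap.range ((𝒜 (1 + i)).subtype ∘ₗ gradedMulMap k A 𝒜 i) :=
    mul_le.2 fun x hx y hy => ⟨⟨x, hx⟩ ⊗ₜ ⟨y, hy⟩, rfl⟩
  rintro ⟨x, hx⟩
  obtain ⟨z, hz⟩ := hle (hgen 1 i ▸ hx)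
  exact ⟨z, Subtype.ext hz⟩

theorem balancedRel_le_ker (i : ℕ) :
    balancedRel k A 𝒜 i ≤ LinearMap.ker (gradedMulMap k A 𝒜 i) :=
  span_le.2 <| by
    rintro _ ⟨x, r, y, _, _, rfl⟩
    rw [SetLike.mem_coe, LinearMap.mem_ker, map_sub, sub_eq_zero]
    exact Subtype.ext (mul_assoc (x : A) r y)

def gradedComponent (m : ℕ) : A →ₗ[k] 𝒜 m :=
  DirectSum.component k ℕ (fun i => 𝒜 i) m ∘ₗ (DirectSum.decomposeLinearEquiv 𝒜).toLinearMap

theorem gradedComponent_apply (m : ℕ) (x : A) :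
    gradedComponent 𝒜 m x = DirectSum.decompose 𝒜 x m := rfl

def gradedMulRight (v : 𝒜 1) (i : ℕ) : 𝒜 i →ₗ[k] 𝒜 (i + 1) :=
  (LinearMap.mulRight k (v : A)).restrict fun _ hq => SetLike.mul_mem_graded hq v.2

@[simp] theorem gradedMulRight_apply (v : 𝒜 1) (i : ℕ) (y : 𝒜 i) :
    (gradedMulRight 𝒜 v i y : A) = y * v := rfl

def balancedMulRight (v : 𝒜 1) (i : ℕ) : BalancedTensor 𝒜 i →ₗ[k] BalancedTensor 𝒜 (i + 1) :=
  (balancedRel k A 𝒜 i).mapQ _ ((gradedMulRight 𝒜 v i).lTensor _) <| span_le.2 <| by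
    rintro _ ⟨x, r, y, _, _, rfl⟩
    exact tmul_sub_tmul_mem_balancedRel 𝒜 rfl (by simp [mul_assoc])

section Forward

variable {ι : Type*} [Fintype ι] (v : ι → 𝒜 1)

def balancedMulInv (F : ι → A →ₗ[k] A) : (i : ℕ) → A →ₗ[k] BalancedTensor 𝒜 i
  | 0 => (balancedRel k A 𝒜 0).mkQ ∘ₗ (TensorProduct.mk k (𝒜 1) (𝒜 0)).flip 1 ∘ₗ
      gradedComponent 𝒜 1
  | i + 1 => ∑ s, balancedMulRight 𝒜 (v s) i ∘ₗ balancedMulInv F i ∘ₗ F s ∘ₗ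
      GradedAlgebra.proj 𝒜 (1 + (i + 1))

theorem balancedMulInv_mul {F : ι → A →ₗ[k] A}
    (hF : (irrelevantIdeal 𝒜).IsDualBasis (fun s => (v s : A)) F)
    {p : A} (hp : p ∈ 𝒜 1) (y : A) :
    ∀ i, balancedMulInv 𝒜 v F i (p * y) =
      Submodule.Quotient.mk (⟨p, hp⟩ ⊗ₜ DirectSum.decompose 𝒜 y i)
  | 0 => by
    refine (Submodule.Quotient.eq _).2 (tmul_sub_tmul_mem_balancedRel 𝒜 ?_ (mul_one _).symm)
    exact DirectSum.coe_decompose_mul_add_of_left_mem 𝒜 (b := y) (j := 0) hp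
  | i + 1 => by
    set y' := GradedAlgebra.proj 𝒜 (i + 1) y
    have hy' : y' ∈ 𝒜 (i + 1) := SetLike.coe_mem _
    have hsum : ∑ s, gradedMulRight 𝒜 (v s) i (DirectSum.decompose 𝒜 (F s y') i) =
        DirectSum.decompose 𝒜 y (i + 1) := by
      apply Subtype.ext
      simp only [AddSubmonoidClass.coe_finsetSum, gradedMulRight_apply,
        ← DirectSum.coe_decompose_mul_add_of_right_mem 𝒜 (v _).2]
      simp only [← GradedAlgebra.proj_apply, ← map_sum,
        hF.sum_mul y' (mem_irrelevantIdeal 𝒜 i.succ_pos hy')]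
      exact DirectSum.decompose_of_mem_same 𝒜 hy'
    have hpy : GradedAlgebra.proj 𝒜 (1 + (i + 1)) (p * y) = p * y' :=
      DirectSum.coe_decompose_mul_add_of_left_mem 𝒜 hp
    simp only [balancedMulInv, LinearMap.sum_apply, LinearMap.comp_apply, hpy,
      hF.map_mul _ p y' (mem_irrelevantIdeal 𝒜 i.succ_pos hy'), balancedMulInv_mul hF hp]
    rw [← hsum, TensorProduct.tmul_sum, ← Submodule.mkQ_apply, map_sum]
    rfl

theorem ker_gradedMulMap_le_balancedRel {F : ι → A →ₗ[k] A}
    (hF : (irrelevantIdeal 𝒜).IsDualBasis (fun s => (v s : A)) F) (i : ℕ) :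
    LinearMap.ker (gradedMulMap k A 𝒜 i) ≤ balancedRel k A 𝒜 i := by
  have hinv : ∀ z, balancedMulInv 𝒜 v F i (gradedMulMap k A 𝒜 i z) = Submodule.Quotient.mk z := by
    intro z
    induction z using TensorProduct.induction_on with
    | zero => simp
    | tmul p q => simp [balancedMulInv_mul 𝒜 v hF p.2]
    | add z z' hz hz' => simp only [map_add, Submodule.coe_add, hz, hz', Submodule.Quotient.mk_add]
  intro z hz
  rw [← Submodule.Quotient.mk_eq_zero, ← hinv, LinearMap.mem_ker.1 hz, ZeroMemClass.coe_zero,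
    map_zero]

theorem isDualBasisProj_of_isDualBasis {n : ℕ} (v : Fin n → 𝒜 1) {F : Fin n → A →ₗ[k] A}
    (hF : (irrelevantIdeal 𝒜).IsDualBasis (fun s => (v s : A)) F) :
    IsDualBasisProj A (𝒜 0) (𝒜 1) := by
  let c s := GradedAlgebra.proj 𝒜 0 ∘ₗ F s ∘ₗ GradedAlgebra.proj 𝒜 1
  have hproj1 : ∀ x, GradedAlgebra.proj 𝒜 1 x ∈ irrelevantIdeal 𝒜 := fun x =>
    mem_irrelevantIdeal 𝒜 one_pos (SetLike.coe_mem _)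
  refine ⟨n, fun s => v s, fun s => c s, fun s => (v s).2, fun s => map_add (c s),
    fun s x => SetLike.coe_mem _, fun s r x hr => ?_, fun x hx => ?_⟩
  · have hr1 : GradedAlgebra.proj 𝒜 1 (r * x) = r * GradedAlgebra.proj 𝒜 1 x :=
      DirectSum.coe_decompose_mul_add_of_left_mem 𝒜 (i := 0) (j := 1) hr
    have hr0 : ∀ y, GradedAlgebra.proj 𝒜 0 (r * y) = r * GradedAlgebra.proj 𝒜 0 y := fun y =>
      DirectSum.coe_decompose_mul_add_of_left_mem 𝒜 (i := 0) (j := 0) hr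
    simp only [c, LinearMap.comp_apply, hr1, hF.map_mul s r _ (hproj1 x), hr0]
  · have hx1 : GradedAlgebra.proj 𝒜 1 x = x := DirectSum.decompose_of_mem_same 𝒜 hx
    have hv : ∀ y s, GradedAlgebra.proj 𝒜 0 y * v s = GradedAlgebra.proj 𝒜 1 (y * v s) := fun y s =>
      (DirectSum.coe_decompose_mul_add_of_right_mem 𝒜 (i := 0) (j := 1) (v s).2).symm
    simp only [c, LinearMap.comp_apply, hx1, hv, ← map_sum, hF.sum_mul x (hx1 ▸ hproj1 x)]

end Forward

def IsBalancedSection {i : ℕ} (σ : A →ₗ[k] 𝒜 1 ⊗[k] 𝒜 i) : Prop :=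
  ∀ x ∈ 𝒜 (1 + i), ∀ z, (gradedMulMap k A 𝒜 i z : A) = x → σ x - z ∈ balancedRel k A 𝒜 i

theorem exists_isBalancedSection {i : ℕ} (hsurj : Function.Surjective (gradedMulMap k A 𝒜 i))
    (hker : LinearMap.ker (gradedMulMap k A 𝒜 i) ≤ balancedRel k A 𝒜 i) :
    ∃ σ : A →ₗ[k] 𝒜 1 ⊗[k] 𝒜 i, IsBalancedSection 𝒜 σ := by
  obtain ⟨g, hg⟩ := (gradedMulMap k A 𝒜 i).exists_rightInverse_of_surjective
    (LinearMap.range_eq_top.2 hsurj)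
  refine ⟨g ∘ₗ gradedComponent 𝒜 (1 + i), fun x hx z hz => hker ?_⟩
  rw [LinearMap.mem_ker, map_sub, LinearMap.comp_apply, ← LinearMap.comp_apply _ g, hg,
    LinearMap.id_apply, sub_eq_zero]
  exact Subtype.ext ((DirectSum.decompose_of_mem_same 𝒜 hx).trans hz.symm)

def liftGraded {M : Type*} [AddCommMonoid M] [Module k M] (f : ℕ → A →ₗ[k] M) : A →ₗ[k] M :=
  DirectSum.toModule k ℕ M (fun m => f m ∘ₗ (𝒜 m).subtype) ∘ₗ
    (DirectSum.decomposeLinearEquiv 𝒜).toLinearMap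

theorem liftGraded_of_mem {M : Type*} [AddCommMonoid M] [Module k M] (f : ℕ → A →ₗ[k] M)
    {m : ℕ} {x : A} (hx : x ∈ 𝒜 m) : liftGraded 𝒜 f x = f m x := by
  rw [liftGraded, LinearMap.comp_apply, LinearEquiv.coe_coe,
    DirectSum.decomposeLinearEquiv_apply, DirectSum.decompose_of_mem 𝒜 hx,
    ← DirectSum.lof_eq_of k, DirectSum.toModule_lof]
  rfl

theorem isDualBasis_irrelevantIdeal_of_homogeneous {ι : Type*} [Fintype ι] {v : ι → A}
    {F : ι → A →ₗ[k] A} (hv : ∀ s, v s ∈ irrelevantIdeal 𝒜)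
    (hmul : ∀ s d m, ∀ a ∈ 𝒜 d, ∀ x ∈ 𝒜 (m + 1), F s (a * x) = a * F s x)
    (hsum : ∀ m, ∀ x ∈ 𝒜 (m + 1), ∑ s, F s x * v s = x) :
    (irrelevantIdeal 𝒜).IsDualBasis v F := by
  have hmul' : ∀ s a, ∀ x ∈ irrelevantIdeal 𝒜, F s (a * x) = a * F s x := by
    intro s a x hx
    induction hx using Submodule.span_induction generalizing a with
    | mem x hx =>
      obtain ⟨i, hi, hx⟩ := hx
      obtain ⟨m, rfl⟩ := Nat.exists_eq_add_of_lt hi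
      induction a using DirectSum.Decomposition.inductionOn 𝒜 with
      | zero => simp
      | homogeneous a => exact hmul s _ m a a.2 x (by simpa using hx)
      | add a b ha hb => rw [add_mul, map_add, ha, hb, add_mul]
    | zero => simp
    | add x y _ _ hx hy => rw [mul_add, map_add, map_add, hx, hy, mul_add]
    | smul b x _ hx => rw [smul_eq_mul, ← mul_assoc, hx, hx, mul_assoc]
  refine ⟨hv, hmul', fun x hx => ?_⟩
  induction hx using Submodule.span_induction with
  | mem x hx =>
    obtain ⟨i, hi, hx⟩ := hx
    obtain ⟨m, rfl⟩ := Nat.exists_eq_add_of_lt hi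
    exact hsum m x (by simpa using hx)
  | zero => simp
  | add x y _ _ hx hy => simp only [map_add, add_mul, Finset.sum_add_distrib, hx, hy]
  | smul b x hx' ih =>
    simp only [smul_eq_mul, hmul' _ b x hx', mul_assoc, ← Finset.mul_sum, ih]

section Backward

variable (σ : ∀ i, A →ₗ[k] 𝒜 1 ⊗[k] 𝒜 (i + 1))

def extendCoord (c : A →ₗ[k] A) : ℕ → A →ₗ[k] A
  | 0 => c
  | i + 1 => mulLeftLift 𝒜 (extendCoord c i) (i + 1) ∘ₗ σ i

variable {σ}

theorem extendCoord_succ_mul_of_mem_zero (hσ : ∀ i, IsBalancedSection 𝒜 (σ i))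
    {c : A →ₗ[k] A} {i : ℕ}
    (hc : ∀ r ∈ 𝒜 0, ∀ x ∈ 𝒜 (i + 1), extendCoord 𝒜 σ c i (r * x) = r * extendCoord 𝒜 σ c i x)
    {p q : A} (hp : p ∈ 𝒜 1) (hq : q ∈ 𝒜 (i + 1)) :
    extendCoord 𝒜 σ c (i + 1) (p * q) = p * extendCoord 𝒜 σ c i q := by
  have := balancedRel_le_ker_mulLeftLift 𝒜 hc
    (hσ i _ (SetLike.mul_mem_graded hp hq) (⟨p, hp⟩ ⊗ₜ ⟨q, hq⟩) rfl)
  rwa [LinearMap.mem_ker, map_sub, sub_eq_zero] at this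

section

variable (hgen : ∀ i j, 𝒜 i * 𝒜 j = 𝒜 (i + j)) (hσ : ∀ i, IsBalancedSection 𝒜 (σ i))
  {c : A →ₗ[k] A} (hc : ∀ r ∈ 𝒜 0, ∀ x ∈ 𝒜 1, c (r * x) = r * c x)
include hgen hσ hc

theorem extendCoord_mul_of_mem_zero :
    ∀ i, ∀ r ∈ 𝒜 0, ∀ x ∈ 𝒜 (i + 1),
      extendCoord 𝒜 σ c i (r * x) = r * extendCoord 𝒜 σ c i x
  | 0 => hc
  | i + 1 => fun r hr x hx => by
    have ih := extendCoord_mul_of_mem_zero i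
    rw [add_comm, ← hgen] at hx
    refine Submodule.mul_induction_on hx (fun p hp q hq => ?_) (fun x y hx hy => ?_)
    · rw [← mul_assoc, extendCoord_succ_mul_of_mem_zero 𝒜 hσ ih (SetLike.mul_mem_graded hr hp) hq,
        extendCoord_succ_mul_of_mem_zero 𝒜 hσ ih hp hq, mul_assoc]
    · rw [mul_add, map_add, map_add, hx, hy, mul_add]

theorem extendCoord_succ_mul (i : ℕ) {p q : A} (hp : p ∈ 𝒜 1) (hq : q ∈ 𝒜 (i + 1)) :
    extendCoord 𝒜 σ c (i + 1) (p * q) = p * extendCoord 𝒜 σ c i q :=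
  extendCoord_succ_mul_of_mem_zero 𝒜 hσ (extendCoord_mul_of_mem_zero 𝒜 hgen hσ hc i) hp hq

theorem extendCoord_mul : ∀ d i, ∀ a ∈ 𝒜 d, ∀ x ∈ 𝒜 (i + 1),
    extendCoord 𝒜 σ c (d + i) (a * x) = a * extendCoord 𝒜 σ c i x
  | 0, i, a, ha, x, hx => by
    rw [zero_add]
    exact extendCoord_mul_of_mem_zero 𝒜 hgen hσ hc i a ha x hx
  | d + 1, i, a, ha, x, hx => by
    rw [add_comm, ← hgen] at ha
    refine Submodule.mul_induction_on ha (fun p hp b hb => ?_) (fun a b ha hb => ?_)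
    · rw [show d + 1 + i = d + i + 1 by omega, mul_assoc,
        extendCoord_succ_mul 𝒜 hgen hσ hc (d + i) hp
          (SetLike.mul_mem_graded hb hx : b * x ∈ 𝒜 (d + (i + 1))),
        extendCoord_mul d i b hb x hx, mul_assoc]
    · rw [add_mul, map_add, ha, hb, add_mul]

end

theorem sum_extendCoord_mul {ι : Type*} [Fintype ι] (hgen : ∀ i j, 𝒜 i * 𝒜 j = 𝒜 (i + j))
    (hσ : ∀ i, IsBalancedSection 𝒜 (σ i)) {c : ι → A →ₗ[k] A}
    (hc : ∀ j, ∀ r ∈ 𝒜 0, ∀ x ∈ 𝒜 1, c j (r * x) = r * c j x) {b : ι → A}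
    (hb : ∀ x ∈ 𝒜 1, ∑ j, c j x * b j = x) :
    ∀ i, ∀ x ∈ 𝒜 (i + 1), ∑ j, extendCoord 𝒜 σ (c j) i x * b j = x
  | 0 => hb
  | i + 1 => fun x hx => by
    rw [add_comm, ← hgen] at hx
    refine Submodule.mul_induction_on hx (fun p hp q hq => ?_) (fun x y hx hy => ?_)
    · simp only [extendCoord_succ_mul 𝒜 hgen hσ (hc _) i hp hq, mul_assoc, ← Finset.mul_sum,
        sum_extendCoord_mul hgen hσ hc hb i q hq]
    · simp only [map_add, add_mul, Finset.sum_add_distrib, hx, hy]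

theorem projective_irrelevantIdeal (hgen : ∀ i j, 𝒜 i * 𝒜 j = 𝒜 (i + j))
    (hsurj : ∀ i, Function.Surjective (gradedMulMap k A 𝒜 i))
    (hker : ∀ i, LinearMap.ker (gradedMulMap k A 𝒜 i) ≤ balancedRel k A 𝒜 i)
    (hdb : IsDualBasisProj A (𝒜 0) (𝒜 1)) :
    Module.Projective A (irrelevantIdeal 𝒜) := by
  obtain ⟨n, b, c, hb, hadd, -, hc, hbc⟩ := hdb
  choose σ hσ using fun i => exists_isBalancedSection 𝒜 (hsurj (i + 1)) (hker (i + 1))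
  let c' j : A →ₗ[k] A :=
    { toFun := c j
      map_add' := hadd j
      map_smul' t x := by
        simpa [Algebra.smul_def] using hc j _ x (SetLike.algebraMap_mem_graded 𝒜 t) }
  have hc' : ∀ j, ∀ r ∈ 𝒜 0, ∀ x ∈ 𝒜 1, c' j (r * x) = r * c' j x :=
    fun j r hr x _ => hc j r x hr
  -- `m - 1` truncates at `m = 0`; degree `0` never matters since `J` has no degree-0 part.
  refine (isDualBasis_irrelevantIdeal_of_homogeneous 𝒜
    (F := fun j => liftGraded 𝒜 fun m => extendCoord 𝒜 σ (c' j) (m - 1))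
    (fun j => mem_irrelevantIdeal 𝒜 one_pos (hb j)) ?_ ?_).projective
  · intro j d m a ha x hx
    rw [liftGraded_of_mem 𝒜 _ (SetLike.mul_mem_graded ha hx), liftGraded_of_mem 𝒜 _ hx]
    simpa using extendCoord_mul 𝒜 hgen hσ (hc' j) d m a ha x hx
  · intro m x hx
    simp only [liftGraded_of_mem 𝒜 _ hx, Nat.add_sub_cancel]
    exact sum_extendCoord_mul 𝒜 hgen hσ hc' (fun x hx => (hbc x hx).symm) m x hx

end Backward

end Graded

/-- For a finite-dimensional graded algebra `A = ⊕ A_i` with `A_i · A_j = A_{i+j}`,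
the ideal `J = ⊕_{i ≥ 1} A_i` is a projective left `A`-module iff `A` is the
tensor algebra `A_0[A_1]` (multiplication induces isomorphisms
`A_1 ⊗_{A_0} A_i ≅ A_{1+i}`) and `A_1` is a projective left `A_0`-module. -/
theorem stmt14 (k A : Type) [Field k] [Ring A] [Algebra k A] [FiniteDimensional k A]
    (𝒜 : ℕ → Submodule k A) [GradedRing 𝒜]
    (hgen : ∀ i j, 𝒜 i * 𝒜 j = 𝒜 (i + j)) :
    Module.Projective A ↥(Submodule.span A {x : A | ∃ i, 0 < i ∧ x ∈ 𝒜 i}) ↔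
      ((∀ i, Function.Surjective (gradedMulMap k A 𝒜 i) ∧
          LinearMap.ker (gradedMulMap k A 𝒜 i) = balancedRel k A 𝒜 i) ∧
        IsDualBasisProj A (𝒜 0 : Set A) (𝒜 1 : Set A)) := by
  refine ⟨fun hproj => ?_, fun ⟨hμ, hdb⟩ =>
    projective_irrelevantIdeal 𝒜 hgen (fun i => (hμ i).1) (fun i => (hμ i).2.le) hdb⟩
  obtain ⟨n, v, hv⟩ := exists_span_eq_irrelevantIdeal 𝒜 hgen
  obtain ⟨F, hF⟩ := Submodule.exists_isDualBasis (k := k)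
    (fun s => mem_irrelevantIdeal 𝒜 one_pos (v s).2) hv
  exact ⟨fun i => ⟨gradedMulMap_surjective 𝒜 hgen i,
      (ker_gradedMulMap_le_balancedRel 𝒜 v hF i).antisymm (balancedRel_le_ker 𝒜 i)⟩,
    isDualBasisProj_of_isDualBasis 𝒜 v hF⟩
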